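/- Let n ≥ 13 and let i be an integer with 0 ≤ i ≤ ⌊n/2⌋. In the graph P(n,3), the vertex distance satisfies: d(u_0, v_i) = q_i + r_i if (r_n', i) = (5, ⌊n/2⌋), and d(u_0, v_i) = q_i + r_i + 1 otherwise. -/

import Mathlib

open SimpleGraph

/-- The vertex set of the generalized Petersen graph: two disjoint copies of `ZMod n`. -/
abbrev GPVert (n : ℕ) := ZMod n ⊕ ZMod n

/-- The outer vertices `u_j`. -/
def pu {n : ℕ} (j : ZMod n) : GPVert n := Sum.inl j

/-- The inner vertices `v_j`. -/
def pv {n : ℕ} (j : ZMod n) : GPVert n := Sum.inr j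

/-- The generalized Petersen graph `P(n,k)`, with edges
`u_j u_{j+1}`, `v_j v_{j+k}`, and `u_j v_j` for all `j`. -/
def GP (n k : ℕ) : SimpleGraph (GPVert n) :=
  SimpleGraph.fromRel fun a b =>
    (∃ j : ZMod n, a = pu j ∧ b = pu (j + 1)) ∨
    (∃ j : ZMod n, a = pv j ∧ b = pv (j + (k : ZMod n))) ∨
    (∃ j : ZMod n, a = pu j ∧ b = pv j)

/-- The distance from a vertex to an (unordered) edge:
`d(x, yz) = min (d x y) (d x z)`. -/
noncomputable def edist {V : Type*} (G : SimpleGraph V) (x : V) (e : Sym2 V) : ℕ :=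
  Sym2.lift ⟨fun a b => min (G.dist x a) (G.dist x b), fun a b => min_comm (G.dist x a) (G.dist x b)⟩ e

/-- `S` is an edge resolving set of `G` if any two distinct edges of `G`
are distinguished by their distance to some vertex of `S`. -/
def IsEdgeResolving {V : Type*} (G : SimpleGraph V) (S : Set V) : Prop :=
  ∀ e ∈ G.edgeSet, ∀ e' ∈ G.edgeSet, e ≠ e' → ∃ x ∈ S, edist G x e ≠ edist G x e'

/-- `q_m`: the quotient of `m` upon division by 3. -/
def q3 (m : ℕ) : ℤ := (m : ℤ) / 3

/-- `r_m`: the residue of `m` modulo 3. -/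
def r3 (m : ℕ) : ℤ := (m : ℤ) % 3

/-! A walk in `P(n,3)` moves along the outer cycle in steps of `±1` and along the inner cycles in
steps of `±3`, and must cross a spoke an odd number of times to get from `u_0` to `v_i`. Hence
a walk of length `ℓ` from `u_0` to `v_i` yields integers `a, b` with `a + 3b ≡ i (mod n)` and
`|a| + |b| + 1 ≤ ℓ`. For `i ≤ ⌊n/2⌋` the cheapest such representation is
`i = r_i + 3 q_i`, except when `n = 6m + 5` and `i = 3m + 2`, where `i ≡ -3(m + 1)` is one step
cheaper. Both representations are realised by explicit walks. -/

namespace GP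

variable {n k : ℕ}

def pos : GPVert n → ZMod n := Sum.elim id id

def layer : GPVert n → ℤ := Sum.elim (fun _ => 0) (fun _ => 1)

@[simp] lemma pos_pu (j : ZMod n) : pos (pu j) = j := rfl

@[simp] lemma pos_pv (j : ZMod n) : pos (pv j) = j := rfl

@[simp] lemma layer_pu (j : ZMod n) : layer (pu j) = 0 := rfl

@[simp] lemma layer_pv (j : ZMod n) : layer (pv j) = 1 := rfl

lemma adj_pu_add_one [Nontrivial (ZMod n)] (j : ZMod n) : (GP n k).Adj (pu j) (pu (j + 1)) := by
  rw [GP, fromRel_adj]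
  refine ⟨?_, Or.inl (Or.inl ⟨j, rfl, rfl⟩)⟩
  simp [pu]

lemma adj_pv_add (hk : (k : ZMod n) ≠ 0) (j : ZMod n) : (GP n k).Adj (pv j) (pv (j + k)) := by
  rw [GP, fromRel_adj]
  refine ⟨?_, Or.inl (Or.inr (Or.inl ⟨j, rfl, rfl⟩))⟩
  simpa [pv] using hk

lemma adj_pu_pv (j : ZMod n) : (GP n k).Adj (pu j) (pv j) := by
  rw [GP, fromRel_adj]
  exact ⟨by simp [pu, pv], Or.inl (Or.inr (Or.inr ⟨j, rfl, rfl⟩))⟩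

lemma exists_pos_sub_of_adj {x y : GPVert n} (h : (GP n k).Adj x y) :
    ∃ a b : ℤ, pos y - pos x = a + k * b ∧
      a.natAbs + b.natAbs + (layer y - layer x).natAbs ≤ 1 := by
  rw [GP, fromRel_adj] at h
  rcases h.2 with (⟨j, rfl, rfl⟩ | ⟨j, rfl, rfl⟩ | ⟨j, rfl, rfl⟩) |
      (⟨j, rfl, rfl⟩ | ⟨j, rfl, rfl⟩ | ⟨j, rfl, rfl⟩)
  · exact ⟨1, 0, by simp, by simp⟩
  · exact ⟨0, 1, by simp, by simp⟩
  · exact ⟨0, 0, by simp, by simp⟩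
  · exact ⟨-1, 0, by simp, by simp⟩
  · exact ⟨0, -1, by simp, by simp⟩
  · exact ⟨0, 0, by simp, by simp⟩

lemma exists_pos_sub_of_walk {x y : GPVert n} (w : (GP n k).Walk x y) :
    ∃ a b : ℤ, pos y - pos x = a + k * b ∧
      a.natAbs + b.natAbs + (layer y - layer x).natAbs ≤ w.length := by
  induction w with
  | nil => exact ⟨0, 0, by simp, by simp⟩
  | cons h _ ih =>
    obtain ⟨a₁, b₁, hpos₁, hlen₁⟩ := exists_pos_sub_of_adj h
    obtain ⟨a₂, b₂, hpos₂, hlen₂⟩ := ih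
    refine ⟨a₁ + a₂, b₁ + b₂, ?_, ?_⟩
    · rw [← sub_add_sub_cancel', hpos₁, hpos₂]
      push_cast
      ring
    · rw [Walk.length_cons]
      omega

end GP

lemma SimpleGraph.exists_walk_length_of_adj_add {V A : Type*} [AddMonoid A] {G : SimpleGraph V}
    (f : A → V) (d : A) (h : ∀ j, G.Adj (f j) (f (j + d))) (j : A) (t : ℕ) :
    ∃ w : G.Walk (f j) (f (j + t • d)), w.length = t := by
  induction t with
  | zero => exact ⟨Walk.nil.copy rfl (by simp), by simp⟩
  | succ t ih =>
    obtain ⟨w, hw⟩ := ih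
    refine ⟨(w.concat (h _)).copy rfl (by rw [succ_nsmul, add_assoc]), ?_⟩
    simp [hw]

def gp3Dist (n i : ℕ) : ℤ :=
  if n % 6 = 5 ∧ i = n / 2 then q3 i + r3 i else q3 i + r3 i + 1

lemma gp3Dist_le_natAbs_add_natAbs {n i : ℕ} (hi : i ≤ n / 2) {a b : ℤ}
    (h : (n : ℤ) ∣ a + 3 * b - i) : gp3Dist n i ≤ a.natAbs + b.natAbs + 1 := by
  obtain ⟨c, hc⟩ := h
  have hn : (0 : ℤ) ≤ n := by positivity
  have hnc : n * c = 0 ∨ n * c = -n ∨ n ≤ n * c ∨ n * c ≤ -2 * (n : ℤ) := by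
    rcases le_or_gt 1 c with h1 | h1
    · exact Or.inr (Or.inr (Or.inl (by nlinarith)))
    rcases le_or_gt c (-2) with h2 | h2
    · exact Or.inr (Or.inr (Or.inr (by nlinarith)))
    interval_cases c <;> simp
  unfold gp3Dist q3 r3
  split_ifs <;> omega

lemma gp3Dist_le_length {n i : ℕ} (hi : i ≤ n / 2)
    (w : (GP n 3).Walk (pu 0) (pv (i : ZMod n))) : gp3Dist n i ≤ w.length := by
  obtain ⟨a, b, hpos, hlen⟩ := GP.exists_pos_sub_of_walk w
  have hdvd : (n : ℤ) ∣ a + 3 * b - i := by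
    rw [← ZMod.intCast_zmod_eq_zero_iff_dvd]
    simp only [GP.pos_pu, GP.pos_pv, sub_zero] at hpos
    push_cast at hpos ⊢
    rw [← hpos, sub_self]
  have := gp3Dist_le_natAbs_add_natAbs hi hdvd
  simp only [GP.layer_pu, GP.layer_pv, sub_zero] at hlen
  omega

lemma exists_walk_length_eq_gp3Dist {n i : ℕ} (hn : 3 < n) :
    ∃ w : (GP n 3).Walk (pu 0) (pv (i : ZMod n)), (w.length : ℤ) = gp3Dist n i := by
  have : Fact (1 < n) := ⟨by omega⟩
  have h3 : ((3 : ℕ) : ZMod n) ≠ 0 := by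
    rw [Ne, ZMod.natCast_eq_zero_iff]
    exact fun h => absurd (Nat.le_of_dvd (by norm_num) h) (by omega)
  have inner := exists_walk_length_of_adj_add pv _ (GP.adj_pv_add h3)
  unfold gp3Dist q3 r3
  split_ifs with hexc
  · -- `v_i = v_{-3(q_i + 1)}`, reached from `v_0` backwards along the inner cycle
    obtain ⟨w, hw⟩ := inner (i : ZMod n) (i / 3 + 1)
    have hend : (i : ZMod n) + (i / 3 + 1) • ((3 : ℕ) : ZMod n) = 0 := by
      rw [nsmul_eq_mul, ← Nat.cast_mul, ← Nat.cast_add, show i + (i / 3 + 1) * 3 = n by omega,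
        ZMod.natCast_self]
    refine ⟨Walk.cons (GP.adj_pu_pv 0) (w.reverse.copy (by rw [hend]) rfl), ?_⟩
    simp only [Walk.length_cons, Walk.length_copy, Walk.length_reverse, hw]
    omega
  · obtain ⟨w₁, hw₁⟩ :=
      exists_walk_length_of_adj_add pu (1 : ZMod n) (GP.adj_pu_add_one (k := 3)) 0 (i % 3)
    obtain ⟨w₂, hw₂⟩ := inner ((0 : ZMod n) + (i % 3) • 1) (i / 3)
    have hend : (0 : ZMod n) + (i % 3) • 1 + (i / 3) • ((3 : ℕ) : ZMod n) = i := by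
      simp only [nsmul_eq_mul, mul_one, zero_add]
      exact_mod_cast congrArg (Nat.cast : ℕ → ZMod n) (Nat.mod_add_div' i 3)
    refine ⟨(w₁.append (Walk.cons (GP.adj_pu_pv _) w₂)).copy rfl (by rw [hend]), ?_⟩
    simp only [Walk.length_copy, Walk.length_append, Walk.length_cons, hw₁, hw₂]
    omega

/-- Distance from `u_0` to `v_i` in `P(n,3)` for `0 ≤ i ≤ ⌊n/2⌋`, `n ≥ 13`. -/
theorem dist_u0_vi (n i : ℕ) (hn : 13 ≤ n) (hi : i ≤ n / 2) :
    ((GP n 3).dist (pu 0) (pv (i : ZMod n)) : ℤ) =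
      if n % 6 = 5 ∧ i = n / 2 then q3 i + r3 i
      else q3 i + r3 i + 1 := by
  change _ = gp3Dist n i
  obtain ⟨w, hw⟩ := exists_walk_length_eq_gp3Dist (by omega : 3 < n)
  obtain ⟨p, hp⟩ := Reachable.exists_walk_length_eq_dist ⟨w⟩
  refine le_antisymm ?_ ?_
  · exact hw ▸ Nat.cast_le.mpr (dist_le w)
  · exact hp ▸ gp3Dist_le_length hi p
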